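/- If n and m are positive integers with n < m and a(n) + 2^n = a(m) + 2^m, then n = 5 and m = 9; moreover a(5) + 2^5 = a(9) + 2^9 = 55. -/

import Mathlib

/-- The sequence `a` defined by `a 0 = 1`, `a 1 = -1`,
`a n = -3 * a (n-1) - 4 * a (n-2)` for `n ≥ 2`. -/
def a : ℕ → ℤ
  | 0 => 1
  | 1 => -1
  | n + 2 => -3 * a (n + 1) - 4 * a n

/-!
`a n` is the `√-7`-coordinate of `(1 + √-7) αⁿ` with `α = (-3 + √-7) / 2` a root of `X² + 3X + 4`, whose
complex absolute value is `2`. Write `c = a n + 2ⁿ = a m + 2ᵐ`.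

Archimedean side: the norm form gives `(2 a (m+1) + 3 a m)² + 7 (a m)² = 8 · 4ᵐ`; substituting
`a m = c - 2ᵐ` writes `56 c²` as a difference of two squares `(2ᵐ + 7c)² - W²`, so `c ≠ 0` forces
`2ᵐ ≤ 56 c² - 7c`, while `|c| = O(2ⁿ)`. Hence `m ≤ 2n + 9`.

2-adic side: `X² + 3X + 4` has a root `u ≡ 9 (mod 16)` modulo every power of `2`, and the other
root is divisible by `4`. So modulo `2^(2n+1)` the sequence is geometric with ratio `u` from index
`n` on, and `(u^(m-n) - 1) a n ≡ 2ⁿ - 2ᵐ`. Comparing `2`-adic valuations with the lifting the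
exponent lemma gives `2^(n-3) ∣ m - n`. Together with `m ≤ 2n + 9` this forces `n < 8`, and the
remaining cases are a finite check.
-/

theorem a_add_two (n : ℕ) : a (n + 2) = -3 * a (n + 1) - 4 * a n := rfl

theorem odd_a : ∀ n, Odd (a n)
  | 0 => by decide
  | 1 => by decide
  | n + 2 => by
    have h₀ := Int.odd_iff.mp (odd_a n)
    have h₁ := Int.odd_iff.mp (odd_a (n + 1))
    rw [a_add_two, Int.odd_iff]
    omega

theorem a_succ_sq_add_three_mul_add_four_sq (n : ℕ) :
    a (n + 1) ^ 2 + 3 * a (n + 1) * a n + 4 * a n ^ 2 = 2 * 4 ^ n := by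
  induction n with
  | zero => decide
  | succ n ih =>
    rw [a_add_two, pow_succ]
    linear_combination 4 * ih

theorem seven_mul_a_sq_le (n : ℕ) : 7 * a n ^ 2 ≤ 8 * 4 ^ n := by
  nlinarith [a_succ_sq_add_three_mul_add_four_sq n, sq_nonneg (2 * a (n + 1) + 3 * a n)]

theorem le_sq_sub_sq_of_sq_lt_sq {S W : ℤ} (hS : 0 ≤ S) (h : W ^ 2 < S ^ 2) :
    S ≤ S ^ 2 - W ^ 2 := by
  have hlt : |W| < S := abs_lt_of_sq_lt_sq h hS
  nlinarith [abs_nonneg W, sq_abs W]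

theorem two_pow_le_of_a_add_two_pow_eq {m : ℕ} {c : ℤ} (hc : c ≠ 0) (h : a m + 2 ^ m = c) :
    2 ^ m ≤ 56 * c ^ 2 - 7 * c := by
  set A : ℤ := 2 ^ m
  set W := 2 * a (m + 1) + 3 * a m
  have hnorm : W ^ 2 + 7 * a m ^ 2 = 8 * A ^ 2 := by
    have h4 : (4 : ℤ) ^ m = A ^ 2 := by rw [sq, ← mul_pow]; norm_num
    linear_combination 4 * a_succ_sq_add_three_mul_add_four_sq m + 8 * h4
  have hS : 0 ≤ A + 7 * c := by nlinarith [sq_nonneg W, (by positivity : (0 : ℤ) < A)]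
  have hdiff : (A + 7 * c) ^ 2 - W ^ 2 = 56 * c ^ 2 := by
    rw [← h]; linear_combination -hnorm
  have hW : W ^ 2 < (A + 7 * c) ^ 2 := by
    have : 0 < c ^ 2 := by positivity
    linarith
  linarith [le_sq_sub_sq_of_sq_lt_sq hS hW]

theorem le_two_mul_add_nine_of_a_add_two_pow_eq {n m : ℕ} (hn : 0 < n)
    (h : a n + 2 ^ n = a m + 2 ^ m) : m ≤ 2 * n + 9 := by
  set c := a n + 2 ^ n
  have hc : c ≠ 0 := by
    have hodd : Odd c := (odd_a n).add_even ((Int.even_pow' hn.ne').mpr even_two)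
    rintro h0
    simp [h0] at hodd
  have hm := two_pow_le_of_a_add_two_pow_eq hc h.symm
  have ha := seven_mul_a_sq_le n
  have hc2 : -c ≤ c ^ 2 := by rcases le_or_gt 0 c with h | h <;> nlinarith
  have hcB : 7 * c ^ 2 ≤ 30 * 4 ^ n := by
    have h4 : (4 : ℤ) ^ n = (2 ^ n) ^ 2 := by rw [sq, ← mul_pow]; norm_num
    nlinarith [sq_nonneg (a n - 2 ^ n)]
  have : (2 : ℤ) ^ m ≤ 2 ^ (2 * n + 9) := by
    rw [pow_add, pow_mul]
    norm_num
    linarith [pow_pos (by norm_num : (0 : ℤ) < 4) n]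
  exact (pow_le_pow_iff_right₀ (by norm_num : (1 : ℤ) < 2)).mp this

theorem exists_two_pow_dvd_sq_add_three_mul_add_four (K : ℕ) :
    ∃ u : ℤ, u % 16 = 9 ∧ 2 ^ K ∣ u ^ 2 + 3 * u + 4 := by
  suffices ∀ K, ∃ u : ℤ, u % 16 = 9 ∧ 2 ^ (K + 4) ∣ u ^ 2 + 3 * u + 4 from
    (this K).imp fun _ ⟨h16, hdvd⟩ => ⟨h16, (pow_dvd_pow 2 (by omega)).trans hdvd⟩
  intro K
  induction K with
  | zero => exact ⟨9, rfl, by norm_num⟩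
  | succ K ih =>
    obtain ⟨u, h16, v, hv⟩ := ih
    rcases Int.even_or_odd' v with ⟨w, rfl | rfl⟩
    · exact ⟨u, h16, w, by rw [hv]; ring⟩
    · -- `2 * u + 3` is odd, so this adds an odd multiple of `2 ^ (K + 4)` to `u ^ 2 + 3 * u + 4`.
      refine ⟨u + 2 ^ (K + 4), ?_, w + u + 2 + 2 ^ (K + 3), ?_⟩
      · rw [show (2 : ℤ) ^ (K + 4) = 16 * 2 ^ K by ring, Int.add_mul_emod_self_left, h16]
      · linear_combination hv

theorem a_succ_sub_mul_modEq {u : ℤ} {K : ℕ} (hu : 2 ^ K ∣ u ^ 2 + 3 * u + 4) (k : ℕ) :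
    a (k + 1) - u * a k ≡ (-3 - u) ^ k * (-1 - u) [ZMOD 2 ^ K] := by
  induction k with
  | zero => simp [a]
  | succ k ih =>
    have hstep : a (k + 2) - u * a (k + 1) ≡ (-3 - u) * (a (k + 1) - u * a k) [ZMOD 2 ^ K] :=
      Int.modEq_iff_dvd.mpr (by
        rw [a_add_two]
        exact (hu.mul_right (a k)).trans (dvd_of_eq (by ring)))
    rw [pow_succ', mul_assoc]
    exact hstep.trans (ih.mul_left _)

theorem a_succ_modEq_mul {u : ℤ} {n k : ℕ} (hu4 : 4 ∣ u - 1)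
    (hu : 2 ^ (2 * n + 1) ∣ u ^ 2 + 3 * u + 4) (hk : n ≤ k) :
    a (k + 1) ≡ u * a k [ZMOD 2 ^ (2 * n + 1)] := by
  -- The other root `-3 - u` is divisible by `4`, so its part of `a` dies modulo `2 ^ (2 * n + 1)`.
  have hsmall : 2 ^ (2 * n + 1) ∣ (-3 - u) ^ k * (-1 - u) := by
    have h4 : (4 : ℤ) ∣ -3 - u := by omega
    have h2 : (2 : ℤ) ∣ -1 - u := by omega
    refine (pow_dvd_pow 2 (by omega : 2 * n + 1 ≤ 2 * k + 1)).trans ?_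
    rw [pow_succ, pow_mul]
    exact mul_dvd_mul (pow_dvd_pow_of_dvd (by norm_num [h4]) k) h2
  have := (a_succ_sub_mul_modEq hu k).trans (Int.modEq_zero_iff_dvd.mpr hsmall)
  simpa using this.add_right (u * a k)

theorem a_add_modEq_pow_mul {u : ℤ} {n : ℕ} (hu4 : 4 ∣ u - 1)
    (hu : 2 ^ (2 * n + 1) ∣ u ^ 2 + 3 * u + 4) (d : ℕ) :
    a (n + d) ≡ u ^ d * a n [ZMOD 2 ^ (2 * n + 1)] := by
  induction d with
  | zero => simp
  | succ d ih =>
    rw [pow_succ' u, mul_assoc]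
    exact (a_succ_modEq_mul hu4 hu (Nat.le_add_right n d)).trans (ih.mul_left u)

theorem emultiplicity_eq_of_modEq {p x y : ℤ} {K : ℕ} (h : x ≡ y [ZMOD p ^ K])
    (hy : emultiplicity p y < K) : emultiplicity p x = emultiplicity p y := by
  have hxy : (K : ℕ∞) ≤ emultiplicity p (x - y) := le_emultiplicity_of_pow_dvd h.symm.dvd
  simpa using emultiplicity_add_of_gt (hy.trans_le hxy)

theorem emultiplicity_two_pow_sub_one {u : ℤ} (hu : u % 16 = 9) (d : ℕ) :
    emultiplicity 2 (u ^ d - 1) = 3 + emultiplicity (2 : ℤ) d := by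
  have h := Int.two_pow_sub_pow' d (x := u) (y := 1) (by omega) (by omega)
  rw [one_pow] at h
  rw [h]
  obtain ⟨k, hk⟩ : ∃ k, u - 1 = 2 ^ 3 * (2 * k + 1) := ⟨u / 16, by omega⟩
  rw [hk, emultiplicity_mul Int.prime_two, emultiplicity_pow_self_of_prime Int.prime_two,
    emultiplicity_eq_zero.mpr (by omega)]
  simp

theorem emultiplicity_two_pow_sub_two_pow {n m : ℕ} (h : n < m) :
    emultiplicity (2 : ℤ) (2 ^ n - 2 ^ m) = n := by
  obtain ⟨k, rfl⟩ := Nat.exists_eq_add_of_lt h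
  rw [show (2 : ℤ) ^ n - 2 ^ (n + k + 1) = 2 ^ n * (1 - 2 * 2 ^ k) by ring,
    emultiplicity_mul Int.prime_two, emultiplicity_pow_self_of_prime Int.prime_two,
    emultiplicity_eq_zero.mpr (by omega), add_zero]

theorem two_pow_sub_three_dvd_of_a_add_two_pow_eq {n m : ℕ} (hnm : n < m)
    (h : a n + 2 ^ n = a m + 2 ^ m) : 2 ^ (n - 3) ∣ m - n := by
  obtain ⟨u, hu16, hu⟩ := exists_two_pow_dvd_sq_add_three_mul_add_four (2 * n + 1)
  obtain ⟨d, rfl⟩ := Nat.exists_eq_add_of_le hnm.le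
  have hcong : (u ^ d - 1) * a n ≡ 2 ^ n - 2 ^ (n + d) [ZMOD 2 ^ (2 * n + 1)] := by
    have := (a_add_modEq_pow_mul (by omega) hu d).symm.sub_right (a n)
    rwa [← sub_one_mul, show a (n + d) - a n = 2 ^ n - 2 ^ (n + d) by linarith] at this
  have hv := emultiplicity_eq_of_modEq hcong
    (by rw [emultiplicity_two_pow_sub_two_pow hnm]; exact_mod_cast (by omega : n < 2 * n + 1))
  have han : emultiplicity (2 : ℤ) (a n) = 0 :=
    emultiplicity_eq_zero.mpr (by rw [← even_iff_two_dvd, Int.not_even_iff_odd]; exact odd_a n)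
  rw [emultiplicity_mul Int.prime_two, emultiplicity_two_pow_sub_one hu16, han, add_zero,
    emultiplicity_two_pow_sub_two_pow hnm] at hv
  have hle : ((n - 3 : ℕ) : ℕ∞) ≤ emultiplicity (2 : ℤ) d := by
    rw [ENat.natCast_sub, tsub_le_iff_left, ← hv]
    simp
  simpa using Int.natCast_dvd_natCast.mp (by exact_mod_cast pow_dvd_of_le_emultiplicity hle)

theorem add_nine_lt_two_pow_sub_three {n : ℕ} (hn : 8 ≤ n) : n + 9 < 2 ^ (n - 3) := by
  have h := Nat.lt_two_pow_self (n := n - 8)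
  rw [show n - 3 = n - 8 + 5 by omega, pow_add]
  omega

/-- The only pair of positive integers `n < m` with `a n + 2^n = a m + 2^m`
is `(5, 9)`, and the common value there is `55`. -/
theorem only_repeat_a_add_two_pow (n m : ℕ) (hn : 0 < n) (hnm : n < m)
    (h : a n + 2 ^ n = a m + 2 ^ m) :
    n = 5 ∧ m = 9 ∧ a 5 + 2 ^ 5 = 55 ∧ a 9 + 2 ^ 9 = 55 := by
  have hm := le_two_mul_add_nine_of_a_add_two_pow_eq hn h
  have hn8 : n < 8 := by
    by_contra! hn8
    have := Nat.le_of_dvd (by omega) (two_pow_sub_three_dvd_of_a_add_two_pow_eq hnm h)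
    have := add_nine_lt_two_pow_sub_three hn8
    omega
  interval_cases n <;> interval_cases m <;> revert h <;> decide
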